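/- arXiv:2012.12050 — 2 statements merged into one kernel-verified Lean document; each statement's English description precedes it below -/
import Mathlib

section
/- For every n ∈ ℕ, nonnegative real k, and x ∈ [0,1], P_{n,k}^{⟨k/n⟩}(e₁;x) = x, where e₁(t) = t; that is, (1/(n)_{n,k}) · Σ_{m=0}^{n} C(n,m) (nx)_{m,k} (n−nx)_{n−m,k} · (m/n) = x. -/
open Finset Filter

/-- Pochhammer k-symbol: `(λ)_{m,k} = λ(λ+k)⋯(λ+(m-1)k)`. -/
noncomputable def pochK (lam k : ℝ) (m : ℕ) : ℝ :=
  ∏ i ∈ Finset.range m, (lam + i * k)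

/-- Lupaş-type operator based on Polya distribution with Pochhammer k-symbol. -/
noncomputable def LupasP (n : ℕ) (k : ℝ) (f : ℝ → ℝ) (x : ℝ) : ℝ :=
  (1 / pochK n k n) * ∑ m ∈ Finset.range (n + 1),
    (n.choose m : ℝ) * pochK (n * x) k m * pochK (n - n * x) k (n - m) * f (m / n)

/-- Kantorovich-Stancu modification of the Lupaş-type operator. -/
noncomputable def KantK (n : ℕ) (α β k : ℝ) (f : ℝ → ℝ) (x : ℝ) : ℝ :=
  ((n + β + 1) / pochK n k n) * ∑ m ∈ Finset.range (n + 1),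
    (n.choose m : ℝ) * pochK (n * x) k m * pochK (n - n * x) k (n - m) *
      ∫ t in ((m + α) / (n + β + 1))..((m + α + 1) / (n + β + 1)), f t

/-- Modulus of continuity of `f` on `[0,1]`. -/
noncomputable def modulus (f : ℝ → ℝ) (δ : ℝ) : ℝ :=
  sSup {y | ∃ x t : ℝ, x ∈ Set.Icc (0:ℝ) 1 ∧ t ∈ Set.Icc (0:ℝ) 1 ∧
    |t - x| ≤ δ ∧ y = |f t - f x|}

lemma pochK_succ (a k : ℝ) (m : ℕ) : pochK a k (m+1) = pochK a k m * (a + m*k) := by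
  simp [pochK, Finset.prod_range_succ]

lemma pochK_succ' (a k : ℝ) (m : ℕ) : pochK a k (m+1) = a * pochK (a+k) k m := by
  rw [pochK, Finset.prod_range_succ']
  simp only [Nat.cast_zero, zero_mul, add_zero]
  rw [mul_comm]
  congr 1
  apply Finset.prod_congr rfl
  intro i _
  push_cast
  ring

lemma pochK_vand (k : ℝ) : ∀ (N : ℕ) (a b : ℝ),
    ∑ m ∈ Finset.range (N+1), (N.choose m : ℝ) * pochK a k m * pochK b k (N - m)
      = pochK (a+b) k N := by
  intro N
  induction N with
  | zero => intro a b; simp [pochK]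
  | succ N ih =>
    intro a b
    rw [Finset.sum_range_succ']
    have e1 : ∑ m ∈ Finset.range (N+1),
        ((N+1).choose (m+1) : ℝ) * pochK a k (m+1) * pochK b k (N+1-(m+1))
      = (∑ m ∈ Finset.range (N+1), (N.choose m : ℝ) * pochK a k (m+1) * pochK b k (N-m))
      + (∑ m ∈ Finset.range (N+1), (N.choose (m+1) : ℝ) * pochK a k (m+1) * pochK b k (N-m)) := by
      rw [← Finset.sum_add_distrib]
      apply Finset.sum_congr rfl
      intro m hm
      have h : N+1-(m+1) = N-m := by omega
      rw [h, Nat.choose_succ_succ]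
      push_cast; ring
    rw [e1]
    have e2 : (∑ m ∈ Finset.range (N+1), (N.choose (m+1) : ℝ) * pochK a k (m+1) * pochK b k (N-m))
        + (((N+1).choose 0 : ℝ) * pochK a k 0 * pochK b k (N+1-0))
      = ∑ m ∈ Finset.range (N+1), (N.choose m : ℝ) * pochK a k m * pochK b k (N+1-m) := by
      rw [Finset.sum_range_succ' (fun m => (N.choose m : ℝ) * pochK a k m * pochK b k (N+1-m)) N]
      rw [Finset.sum_range_succ]
      simp only [Nat.choose_succ_self, Nat.cast_zero, zero_mul]
      rw [add_zero]
      congr 1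
      · apply Finset.sum_congr rfl
        intro m hm
        have h : N+1-(m+1) = N-m := by omega
        rw [h]
      · simp
    rw [add_assoc, e2, ← Finset.sum_add_distrib]
    have e3 : ∀ m ∈ Finset.range (N+1),
        (N.choose m : ℝ) * pochK a k (m+1) * pochK b k (N-m)
        + (N.choose m : ℝ) * pochK a k m * pochK b k (N+1-m)
        = ((N.choose m : ℝ) * pochK a k m * pochK b k (N-m)) * (a + b + N*k) := by
      intro m hm
      have hm' : m ≤ N := Nat.lt_succ_iff.mp (Finset.mem_range.mp hm)
      have h1 : N + 1 - m = (N - m) + 1 := by omega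
      rw [h1, pochK_succ, pochK_succ]
      have hc : ((N - m : ℕ) : ℝ) = (N : ℝ) - m := by
        rw [Nat.cast_sub hm']
      rw [hc]; ring
    rw [Finset.sum_congr rfl e3, ← Finset.sum_mul, ih, ← pochK_succ]

theorem lupas_e1 (n : ℕ) (hn : 0 < n) (k : ℝ) (hk : 0 ≤ k)
    (x : ℝ) (hx : x ∈ Set.Icc (0:ℝ) 1) :
    LupasP n k (fun t => t) x = x := by
  unfold LupasP
  have hn1 : n = (n-1)+1 := (Nat.succ_pred_eq_of_pos hn).symm
  have hnR : (0:ℝ) < n := by exact_mod_cast hn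
  have hsum : ∑ m ∈ Finset.range (n + 1),
      (n.choose m : ℝ) * pochK (n * x) k m * pochK (n - n * x) k (n - m) * (↑m / ↑n)
      = (n:ℝ) * x * pochK ((n:ℝ)+k) k (n-1) := by
    rw [Finset.sum_range_succ']
    simp only [Nat.cast_zero, zero_div, mul_zero, add_zero]
    have key : ∀ m ∈ Finset.range n,
        (n.choose (m+1) : ℝ) * pochK ((n:ℝ)*x) k (m+1) * pochK ((n:ℝ) - n*x) k (n-(m+1)) * ((↑(m+1)) / n)
        = ((n:ℝ)*x) * (((n-1).choose m : ℝ) * pochK ((n:ℝ)*x+k) k m * pochK ((n:ℝ) - n*x) k ((n-1)-m)) := by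
      intro m hm
      have hm' : m < n := Finset.mem_range.mp hm
      have hne : (n:ℝ) ≠ 0 := hnR.ne'
      have h1 : n - (m+1) = (n-1) - m := by omega
      have hN : n * (n-1).choose m = n.choose (m+1) * (m+1) := by
        simpa [Nat.succ_eq_add_one, Nat.sub_add_cancel hn] using Nat.add_one_mul_choose_eq (n-1) m
      have h2 : (n:ℝ) * ((n-1).choose m : ℝ) = (n.choose (m+1) : ℝ) * ((m:ℝ)+1) := by
        exact_mod_cast hN
      rw [h1, pochK_succ']
      push_cast
      field_simp
      rw [show (n:ℝ)*(1-x) = n - n*x by ring]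
      linear_combination (-x * pochK ((n:ℝ)*x+k) k m * pochK ((n:ℝ)-(n:ℝ)*x) k (n-1-m)) * h2
    rw [Finset.sum_congr rfl key, ← Finset.mul_sum]
    congr 1
    have hv := pochK_vand k (n-1) ((n:ℝ)*x + k) ((n:ℝ) - n*x)
    rw [show (n:ℝ)*x + k + ((n:ℝ) - n*x) = (n:ℝ) + k by ring] at hv
    rw [Nat.sub_add_cancel hn] at hv
    exact hv
  rw [hsum]
  have hpoch : pochK (n:ℝ) k n = (n:ℝ) * pochK ((n:ℝ)+k) k (n-1) := by
    obtain ⟨p, hp⟩ : ∃ p, n = p + 1 := ⟨n-1, by omega⟩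
    subst hp
    rw [show p+1-1 = p from rfl, pochK_succ']
  have hpos : 0 < pochK ((n:ℝ)+k) k (n-1) := by
    apply Finset.prod_pos
    intro i _
    positivity
  rw [hpoch]
  field_simp
end

section
/- For every n ∈ ℕ, nonnegative real k, and x ∈ [0,1], P_{n,k}^{⟨k/n⟩}(e₂;x) = x² + (k+1)x(1−x)/(n+k), where e₂(t) = t². -/
open Finset Filter

lemma pochK_pos (a k : ℝ) (ha : 0 < a) (hk : 0 ≤ k) (m : ℕ) : 0 < pochK a k m :=
  Finset.prod_pos fun i _ => by positivity

lemma vand (k : ℝ) : ∀ n : ℕ, ∀ a b : ℝ,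
    ∑ m ∈ range (n+1), (n.choose m : ℝ) * pochK a k m * pochK b k (n-m)
      = pochK (a+b) k n := by
  intro n
  induction n with
  | zero => intro a b; simp [pochK]
  | succ n ih =>
    intro a b
    rw [Finset.sum_range_succ']
    have h1 : ∀ m ∈ range (n+1),
        (((n+1).choose (m+1) : ℕ) : ℝ) * pochK a k (m+1) * pochK b k (n+1-(m+1))
        = (n.choose m : ℝ) * pochK a k m * pochK b k (n-m) * (a + m*k)
          + (n.choose (m+1) : ℝ) * pochK a k (m+1) * pochK b k (n+1-(m+1)) := by
      intro m hm
      rw [Nat.choose_succ_succ]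
      push_cast
      rw [pochK_succ]
      ring
    rw [Finset.sum_congr rfl h1, Finset.sum_add_distrib]
    have h2 : (∑ m ∈ range (n+1),
        (n.choose (m+1) : ℝ) * pochK a k (m+1) * pochK b k (n+1-(m+1)))
        + (((n+1).choose 0 : ℕ):ℝ) * pochK a k 0 * pochK b k (n+1-0)
        = ∑ m ∈ range (n+1), (n.choose m : ℝ) * pochK a k m * pochK b k (n+1-m) := by
      have e : (∑ m ∈ range (n+1), (n.choose m : ℝ) * pochK a k m * pochK b k (n+1-m))
          = ∑ m ∈ range (n+2), (n.choose m : ℝ) * pochK a k m * pochK b k (n+1-m) := by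
        have hz : (n.choose (n+1) : ℝ) = 0 := by
          simp [Nat.choose_eq_zero_of_lt (Nat.lt_succ_self n)]
        conv_rhs => rw [Finset.sum_range_succ]
        rw [hz]; ring
      rw [e]
      conv_rhs => rw [Finset.sum_range_succ']
      simp
    rw [add_assoc, h2]
    have h3 : ∀ m ∈ range (n+1),
        (n.choose m : ℝ) * pochK a k m * pochK b k (n+1-m)
        = (n.choose m : ℝ) * pochK a k m * pochK b k (n-m) * (b + ((n:ℝ)-m)*k) := by
      intro m hm
      rw [mem_range] at hm
      have hmn : m ≤ n := Nat.lt_succ_iff.mp hm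
      have e1 : n + 1 - m = (n - m) + 1 := by omega
      rw [e1, pochK_succ]
      have e2 : ((n - m : ℕ) : ℝ) = (n:ℝ) - m := by
        rw [Nat.cast_sub hmn]
      rw [e2]; ring
    rw [Finset.sum_congr rfl h3, ← Finset.sum_add_distrib]
    have h4 : ∀ m ∈ range (n+1),
        (n.choose m : ℝ) * pochK a k m * pochK b k (n-m) * (a + m*k)
        + (n.choose m : ℝ) * pochK a k m * pochK b k (n-m) * (b + ((n:ℝ)-m)*k)
        = ((n.choose m : ℝ) * pochK a k m * pochK b k (n-m)) * (a + b + n*k) := by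
      intro m hm; ring
    rw [Finset.sum_congr rfl h4, ← Finset.sum_mul, ih a b, ← pochK_succ]

lemma vand1 (k a b : ℝ) (n : ℕ) :
    ∑ m ∈ range (n+2), (m:ℝ) * ((n+1).choose m : ℝ) * pochK a k m * pochK b k (n+1-m)
      = ((n:ℝ)+1) * a * pochK (a+b+k) k n := by
  rw [Finset.sum_range_succ']
  simp only [Nat.cast_zero, zero_mul, add_zero]
  have h1 : ∀ m ∈ range (n+1),
      ((m+1 : ℕ) : ℝ) * (((n+1).choose (m+1) : ℕ) : ℝ) * pochK a k (m+1) * pochK b k (n+1-(m+1))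
      = ((n:ℝ)+1) * a * ((n.choose m : ℝ) * pochK (a+k) k m * pochK b k (n-m)) := by
    intro m hm
    have hc : (((n+1).choose (m+1) : ℕ) : ℝ) * ((m:ℝ)+1) = ((n:ℝ)+1) * (n.choose m : ℝ) := by
      exact_mod_cast congrArg (Nat.cast (R := ℝ)) (Nat.add_one_mul_choose_eq n m).symm
    have e : n + 1 - (m+1) = n - m := by omega
    rw [e, pochK_succ']
    push_cast
    linear_combination (a * pochK (a+k) k m * pochK b k (n-m)) * hc
  rw [Finset.sum_congr rfl h1, ← Finset.mul_sum, vand k n (a+k) b]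
  rw [show a+k+b = a+b+k from by ring]

lemma vand2 (k a b : ℝ) (n : ℕ) :
    ∑ m ∈ range (n+3), (m:ℝ) * ((m:ℝ)-1) * ((n+2).choose m : ℝ) * pochK a k m * pochK b k (n+2-m)
      = ((n:ℝ)+2) * ((n:ℝ)+1) * a * (a+k) * pochK (a+b+2*k) k n := by
  rw [Finset.sum_range_succ']
  simp only [Nat.cast_zero, zero_mul, add_zero, zero_sub]
  have h1 : ∀ m ∈ range (n+2),
      ((m+1 : ℕ) : ℝ) * (((m+1:ℕ):ℝ)-1) * (((n+2).choose (m+1) : ℕ) : ℝ) * pochK a k (m+1) * pochK b k (n+2-(m+1))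
      = ((n:ℝ)+2) * a * ((m:ℝ) * ((n+1).choose m : ℝ) * pochK (a+k) k m * pochK b k (n+1-m)) := by
    intro m hm
    have hc : (((n+2).choose (m+1) : ℕ) : ℝ) * ((m:ℝ)+1) = ((n:ℝ)+2) * ((n+1).choose m : ℝ) := by
      exact_mod_cast congrArg (Nat.cast (R := ℝ)) (Nat.add_one_mul_choose_eq (n+1) m).symm
    have e : n + 2 - (m+1) = n + 1 - m := by omega
    rw [e, pochK_succ']
    push_cast
    linear_combination ((m:ℝ) * a * pochK (a+k) k m * pochK b k (n+1-m)) * hc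
  rw [Finset.sum_congr rfl h1, ← Finset.mul_sum, vand1 k (a+k) b n]
  rw [show a+k+b+k = a+b+2*k from by ring]
  ring

theorem lupas_e2 (n : ℕ) (hn : 0 < n) (k : ℝ) (hk : 0 ≤ k)
    (x : ℝ) (hx : x ∈ Set.Icc (0:ℝ) 1) :
    LupasP n k (fun t => t ^ 2) x = x ^ 2 + (k + 1) * x * (1 - x) / (n + k) := by
  obtain _ | _ | N := n
  · exact absurd hn (lt_irrefl 0)
  · -- n = 1
    have h1k : (1:ℝ) + k ≠ 0 := by positivity
    simp only [LupasP, Finset.sum_range_succ, Finset.sum_range_zero, pochK,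
      Finset.prod_range_one, Finset.prod_range_zero]
    push_cast
    field_simp
    simp only [Nat.choose_self, Finset.prod_range_one, Nat.cast_one, Nat.cast_zero, mul_zero, add_zero]
    ring
  · -- n = N + 2
    simp only [LupasP]
    set a := ((N+2:ℕ):ℝ) * x with ha
    set b := ((N+2:ℕ):ℝ) - ((N+2:ℕ):ℝ) * x with hb
    have hc : ((N+2:ℕ):ℝ) = (N:ℝ)+2 := by push_cast; ring
    have h2 : ∑ m ∈ range (N+2+1), (m:ℝ) * ((m:ℝ)-1) * (((N+2).choose m):ℝ) *
        pochK a k m * pochK b k (N+2-m)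
        = ((N:ℝ)+2) * ((N:ℝ)+1) * a * (a+k) * pochK (a+b+2*k) k N := vand2 k a b N
    have h1 : ∑ m ∈ range (N+2+1), (m:ℝ) * (((N+2).choose m):ℝ) *
        pochK a k m * pochK b k (N+2-m)
        = (((N+1:ℕ):ℝ)+1) * a * pochK (a+b+k) k (N+1) := vand1 k a b (N+1)
    have hsum : (∑ m ∈ range (N+2+1), (((N+2).choose m):ℝ) * pochK a k m *
          pochK b k (N+2-m) * ((m:ℝ)/((N+2:ℕ):ℝ))^2)
        = (1/((N:ℝ)+2)^2) *
          ((∑ m ∈ range (N+2+1), (m:ℝ) * ((m:ℝ)-1) * (((N+2).choose m):ℝ) *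
              pochK a k m * pochK b k (N+2-m))
            + ∑ m ∈ range (N+2+1), (m:ℝ) * (((N+2).choose m):ℝ) *
              pochK a k m * pochK b k (N+2-m)) := by
      rw [← Finset.sum_add_distrib, Finset.mul_sum]
      refine Finset.sum_congr rfl fun m _ => ?_
      rw [hc]
      have : ((N:ℝ)+2) ≠ 0 := by positivity
      field_simp
      ring
    rw [hsum, h2, h1]
    have hab2 : a + b + 2*k = (N:ℝ)+2+2*k := by rw [ha, hb, hc]; ring
    have hab1 : a + b + k = (N:ℝ)+2+k := by rw [ha, hb, hc]; ring
    rw [hab2, hab1]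
    have hD : pochK ((N+2:ℕ):ℝ) k (N+2) =
        ((N:ℝ)+2) * (((N:ℝ)+2)+k) * pochK ((N:ℝ)+2+2*k) k N := by
      rw [pochK_succ' ((N+2:ℕ):ℝ) k (N+1), pochK_succ' _ k N, hc,
        show (N:ℝ)+2+k+k = (N:ℝ)+2+2*k from by ring]
      ring
    have hPk1 : pochK ((N:ℝ)+2+k) k (N+1) =
        ((N:ℝ)+2+k) * pochK ((N:ℝ)+2+2*k) k N := by
      rw [pochK_succ', show (N:ℝ)+2+k+k = (N:ℝ)+2+2*k from by ring]
    rw [hD, hPk1, ha, hc]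
    push_cast
    have hP : 0 < pochK ((N:ℝ)+2+2*k) k N := pochK_pos _ _ (by positivity) hk N
    have hn2 : ((N:ℝ)+2) ≠ 0 := by positivity
    have hnk : ((N:ℝ)+2)+k ≠ 0 := by positivity
    field_simp
    ring
end
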